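/- Let φ ∈ C_c^∞((−1,1)) and for μ ≥ 1 let φ_μ(y) := μ^{1/2}φ(μy), extended 2π-periodically. Let a, a' ∈ ℤ² be linearly independent, σ ∈ ℕ with σ ≥ 1 and c, c' ∈ ℝ. Then for every 1 ≤ p ≤ ∞, ∥φ_μ(σ a·x − c) · φ_μ(σ a'·x − c')∥_{L^p(T²)} ≤ C(φ,a,a',p) μ^{1−2/p}, with a constant independent of μ, σ, c, c'. -/

import Mathlib

open MeasureTheory Real Filter Topology ENNReal

noncomputable section

abbrev V2 : Type := ℝ × ℝ
abbrev V3 : Type := Fin 3 → ℝ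

def Q2 : Set V2 := Set.Icc (0:ℝ) (2*π) ×ˢ Set.Icc (0:ℝ) (2*π)

def pd1 (f : V2 → ℝ) (x : V2) : ℝ := fderiv ℝ f x (1, 0)
def pd2 (f : V2 → ℝ) (x : V2) : ℝ := fderiv ℝ f x (0, 1)

/-- `a·x = a₁x₁ + a₂x₂` for `a ∈ ℤ²`. -/
def adot (a : ℤ × ℤ) (x : V2) : ℝ := a.1 * x.1 + a.2 * x.2

/-- `2π`-periodization of a function supported in `(−π,π)`. -/
def perExt (h : ℝ → ℝ) (y : ℝ) : ℝ := ∑' j : ℤ, h (y - 2*π*j)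

/-! ### Auxiliary lemmas -/

/-- An explicit linear map on `ℝ × ℝ`. -/
def Tmap (α β γ δ : ℝ) : V2 →ₗ[ℝ] V2 where
  toFun x := (α*x.1 + β*x.2, γ*x.1 + δ*x.2)
  map_add' x y := by simp; constructor <;> ring
  map_smul' r x := by simp; constructor <;> ring

lemma Tmap_det (α β γ δ : ℝ) : (Tmap α β γ δ).det = α*δ - β*γ := by
  rw [← LinearMap.det_toMatrix (Module.Basis.finTwoProd ℝ), Matrix.det_fin_two]
  simp [LinearMap.toMatrix_apply, Tmap, Module.Basis.finTwoProd_zero, Module.Basis.finTwoProd_one,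
    Module.Basis.coe_finTwoProd_repr]

/-- 1D covering lemma: the periodic `1/μ`-neighbourhood of a point, intersected with
`[-R, R]`, is covered by an open set of measure `≲ (R+1)/μ`. -/
lemma aux_oneD (c R μ : ℝ) (hR : 0 ≤ R) (hμ : 1 ≤ μ) :
    ∃ U : Set ℝ, MeasurableSet U ∧
      (∀ y : ℝ, |y| ≤ R → (∃ j : ℤ, |y - c - 2*π*j| < 1/μ) → y ∈ U) ∧
      volume U ≤ ENNReal.ofReal (((R+1)/π + 1) * (2/μ)) := by
  have hπ : (0:ℝ) < π := pi_pos
  have hμ0 : (0:ℝ) < μ := lt_of_lt_of_le one_pos hμ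
  set j₀ : ℤ := ⌈(-R-1-c)/(2*π)⌉ with hj₀
  set j₁ : ℤ := ⌊(R+1-c)/(2*π)⌋ with hj₁
  refine ⟨⋃ j ∈ Finset.Icc j₀ j₁, Set.Ioo (c+2*π*j - 1/μ) (c+2*π*j + 1/μ), ?_, ?_, ?_⟩
  · exact MeasurableSet.biUnion (Finset.Icc j₀ j₁).countable_toSet
      (fun _ _ => measurableSet_Ioo)
  · rintro y hy ⟨j, hj⟩
    have h1μ : 1/μ ≤ 1 := by
      rw [div_le_one hμ0]; exact hμ
    have hyR := abs_le.1 hy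
    have hlt' := abs_lt.1 (lt_of_lt_of_le hj h1μ)
    have hj' := abs_lt.1 hj
    have hjmem : j ∈ Finset.Icc j₀ j₁ := by
      rw [Finset.mem_Icc]
      constructor
      · rw [hj₀, Int.ceil_le, div_le_iff₀ (by positivity)]
        nlinarith
      · rw [hj₁, Int.le_floor, le_div_iff₀ (by positivity)]
        nlinarith
    refine Set.mem_biUnion hjmem ?_
    constructor <;> [nlinarith; nlinarith]
  · refine le_trans (measure_biUnion_finset_le _ _) ?_
    have hIoo : ∀ j : ℤ, volume (Set.Ioo (c+2*π*j - 1/μ) (c+2*π*j + 1/μ))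
        = ENNReal.ofReal (2/μ) := by
      intro j
      rw [Real.volume_Ioo]
      congr 1
      ring
    simp only [hIoo, Finset.sum_const, nsmul_eq_mul]
    have hcard : ((Finset.Icc j₀ j₁).card : ℝ) ≤ (R+1)/π + 1 := by
      rcases le_or_gt j₀ j₁ with hle | hlt
      · rw [Int.card_Icc]
        have h1 : (0:ℤ) ≤ j₁ + 1 - j₀ := by omega
        have h2 : ((j₁ + 1 - j₀).toNat : ℝ) = (j₁:ℝ) + 1 - j₀ := by
          rw [← Int.cast_natCast, Int.toNat_of_nonneg h1]; push_cast; ring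
        rw [h2]
        have hf : (j₁ : ℝ) ≤ (R+1-c)/(2*π) := Int.floor_le _
        have hc : (-R-1-c)/(2*π) ≤ (j₀ : ℝ) := Int.le_ceil _
        have : (R+1-c)/(2*π) - (-R-1-c)/(2*π) = (R+1)/π := by
          field_simp
          ring
        nlinarith
      · rw [Finset.Icc_eq_empty (by omega)]
        simp
        positivity
    calc ((Finset.Icc j₀ j₁).card : ℝ≥0∞) * ENNReal.ofReal (2/μ)
        = ENNReal.ofReal (((Finset.Icc j₀ j₁).card : ℝ) * (2/μ)) := by
          rw [ENNReal.ofReal_mul (by positivity)]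
          simp
      _ ≤ ENNReal.ofReal (((R+1)/π + 1) * (2/μ)) := by
          apply ENNReal.ofReal_le_ofReal
          apply mul_le_mul_of_nonneg_right hcard (by positivity)

/-- If the periodization is nonzero, the argument is `1/μ`-close to the lattice `2πℤ`. -/
lemma aux_perExt_supp (φ : ℝ → ℝ) (hsupp : Function.support φ ⊆ Set.Ioo (-1:ℝ) 1)
    (μ : ℝ) (hμ : 1 ≤ μ) (y : ℝ)
    (h : perExt (fun z => μ ^ ((1:ℝ)/2) * φ (μ*z)) y ≠ 0) :
    ∃ j : ℤ, |y - 2*π*j| < 1/μ := by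
  have hμ0 : (0:ℝ) < μ := lt_of_lt_of_le one_pos hμ
  by_contra hc
  push_neg at hc
  apply h
  have hz : ∀ j : ℤ, μ ^ ((1:ℝ)/2) * φ (μ*(y - 2*π*j)) = 0 := by
    intro j
    have hφ0 : φ (μ*(y - 2*π*j)) = 0 := by
      by_contra hne
      have := hsupp hne
      rw [Set.mem_Ioo] at this
      have habs : |μ*(y - 2*π*j)| < 1 := abs_lt.2 this
      rw [abs_mul, abs_of_pos hμ0] at habs
      have := hc j
      rw [div_le_iff₀ hμ0] at this
      nlinarith [abs_nonneg (y - 2*π*(j:ℝ))]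
    rw [hφ0, mul_zero]
  unfold perExt
  simp only [hz, tsum_zero]

/-- Pointwise bound on the periodization. -/
lemma aux_perExt_bound (φ : ℝ → ℝ) (hsupp : Function.support φ ⊆ Set.Ioo (-1:ℝ) 1)
    (M : ℝ) (hM : ∀ z, |φ z| ≤ M)
    (μ : ℝ) (hμ : 1 ≤ μ) (y : ℝ) :
    |perExt (fun z => μ ^ ((1:ℝ)/2) * φ (μ*z)) y| ≤ μ ^ ((1:ℝ)/2) * M := by
  have hμ0 : (0:ℝ) < μ := lt_of_lt_of_le one_pos hμ
  have hrpow : (0:ℝ) ≤ μ ^ ((1:ℝ)/2) := Real.rpow_nonneg (le_of_lt hμ0) _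
  have hM0 : 0 ≤ M := le_trans (abs_nonneg _) (hM 0)
  have key : ∀ j : ℤ, μ ^ ((1:ℝ)/2) * φ (μ*(y - 2*π*j)) ≠ 0 → |y - 2*π*j| < 1 := by
    intro j hj
    have hφne : φ (μ*(y - 2*π*j)) ≠ 0 := by
      intro h0; apply hj; rw [h0, mul_zero]
    have := hsupp hφne
    rw [Set.mem_Ioo] at this
    have habs : |μ*(y - 2*π*j)| < 1 := abs_lt.2 this
    rw [abs_mul, abs_of_pos hμ0] at habs
    nlinarith [abs_nonneg (y - 2*π*(j:ℝ))]
  by_cases hex : ∃ j₀ : ℤ, μ ^ ((1:ℝ)/2) * φ (μ*(y - 2*π*j₀)) ≠ 0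
  · obtain ⟨j₀, hj₀⟩ := hex
    have heq : perExt (fun z => μ ^ ((1:ℝ)/2) * φ (μ*z)) y
        = μ ^ ((1:ℝ)/2) * φ (μ*(y - 2*π*j₀)) := by
      unfold perExt
      apply tsum_eq_single
      intro j hj
      by_contra hne
      have h1 := key j hne
      have h2 := key j₀ hj₀
      have hjj : (1:ℝ) ≤ |(j:ℝ) - j₀| := by
        have h0 : j - j₀ ≠ 0 := sub_ne_zero.2 hj
        have h1' : (1:ℤ) ≤ |j - j₀| := Int.one_le_abs h0
        have h2' : ((1:ℤ):ℝ) ≤ ((|j - j₀| : ℤ) : ℝ) := by exact_mod_cast h1'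
        rwa [Int.cast_abs, Int.cast_sub, Int.cast_one] at h2'
      have hdist : |(y - 2*π*j) - (y - 2*π*j₀)| ≤ |y - 2*π*j| + |y - 2*π*(j₀:ℝ)| :=
        abs_sub _ _
      have heq2 : |(y - 2*π*j) - (y - 2*π*j₀)| = 2*π*|(j:ℝ) - j₀| := by
        rw [show (y - 2*π*(j:ℝ)) - (y - 2*π*(j₀:ℝ)) = 2*π*((j₀:ℝ) - j) by ring,
          abs_mul, abs_of_pos Real.two_pi_pos, abs_sub_comm]
      rw [heq2] at hdist
      have hπ3 : (3:ℝ) < π := by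
        have := pi_gt_three
        linarith
      nlinarith
    rw [heq, abs_mul, abs_of_nonneg hrpow]
    exact mul_le_mul_of_nonneg_left (hM _) hrpow
  · push_neg at hex
    have h0 : perExt (fun z => μ ^ ((1:ℝ)/2) * φ (μ*z)) y = 0 := by
      unfold perExt
      simp only [hex, tsum_zero]
    rw [h0, abs_zero]
    positivity

/-- Pointwise bound on the product of two periodizations. -/
lemma aux_prod_bound (φ : ℝ → ℝ) (hsupp : Function.support φ ⊆ Set.Ioo (-1:ℝ) 1)
    (M : ℝ) (hM : ∀ z, |φ z| ≤ M)
    (μ : ℝ) (hμ : 1 ≤ μ) (y y' : ℝ) :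
    |perExt (fun z => μ ^ ((1:ℝ)/2) * φ (μ*z)) y *
      perExt (fun z => μ ^ ((1:ℝ)/2) * φ (μ*z)) y'| ≤ μ * M^2 := by
  have hμ0 : (0:ℝ) < μ := lt_of_lt_of_le one_pos hμ
  have hrpow : (0:ℝ) ≤ μ ^ ((1:ℝ)/2) := Real.rpow_nonneg (le_of_lt hμ0) _
  have hM0 : 0 ≤ M := le_trans (abs_nonneg _) (hM 0)
  have h1 := aux_perExt_bound φ hsupp M hM μ hμ y
  have h2 := aux_perExt_bound φ hsupp M hM μ hμ y'
  have hhalf : μ ^ ((1:ℝ)/2) * μ ^ ((1:ℝ)/2) = μ := by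
    rw [← Real.rpow_add hμ0]
    norm_num
  rw [abs_mul]
  calc |perExt (fun z => μ ^ ((1:ℝ)/2) * φ (μ*z)) y| *
        |perExt (fun z => μ ^ ((1:ℝ)/2) * φ (μ*z)) y'|
      ≤ (μ ^ ((1:ℝ)/2) * M) * (μ ^ ((1:ℝ)/2) * M) :=
        mul_le_mul h1 h2 (abs_nonneg _) (by positivity)
    _ = μ * M^2 := by
        rw [show (μ ^ ((1:ℝ)/2) * M) * (μ ^ ((1:ℝ)/2) * M)
            = (μ ^ ((1:ℝ)/2) * μ ^ ((1:ℝ)/2)) * M^2 by ring, hhalf]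

set_option maxHeartbeats 1000000 in
/-- interaction estimate, Lemma 3.2 (3): for non-parallel directions,
`∥φ_μ(σa·x−c) φ_μ(σa'·x−c')∥_{L^p(T²)} ≲ μ^{1−2/p}`. -/
theorem stmt11 (φ : ℝ → ℝ) (hφ : ContDiff ℝ (⊤ : ℕ∞) φ)
    (hsupp : Function.support φ ⊆ Set.Ioo (-1:ℝ) 1)
    (a a' : ℤ × ℤ) (h : a.1 * a'.2 - a.2 * a'.1 ≠ 0)
    (p : ℝ≥0∞) (hp : 1 ≤ p) :
    ∃ C : ℝ, 0 < C ∧ ∀ μ : ℝ, 1 ≤ μ → ∀ σ : ℕ, 1 ≤ σ → ∀ c c' : ℝ,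
      eLpNorm (fun x : V2 =>
          perExt (fun z => μ ^ ((1:ℝ)/2) * φ (μ*z)) ((σ:ℝ) * adot a x - c) *
          perExt (fun z => μ ^ ((1:ℝ)/2) * φ (μ*z)) ((σ:ℝ) * adot a' x - c'))
        p (volume.restrict Q2)
        ≤ ENNReal.ofReal (C * μ ^ ((1:ℝ) - 2/p.toReal)) := by
  -- a uniform bound on φ
  obtain ⟨M, hM⟩ : ∃ M : ℝ, ∀ z, |φ z| ≤ M := by
    have hcs : HasCompactSupport φ := by
      apply HasCompactSupport.intro (isCompact_Icc : IsCompact (Set.Icc (-1:ℝ) 1))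
      intro x hx
      by_contra h0
      exact hx (Set.Ioo_subset_Icc_self (hsupp h0))
    obtain ⟨M, hM⟩ := hcs.exists_bound_of_continuous hφ.continuous
    exact ⟨M, fun z => by simpa [Real.norm_eq_abs] using hM z⟩
  have hM0 : 0 ≤ M := le_trans (abs_nonneg _) (hM 0)
  -- determinant and norms of a, a'
  set d : ℝ := (a.1:ℝ)*a'.2 - (a.2:ℝ)*a'.1 with hd_def
  have hd : d ≠ 0 := by
    have : ((a.1 * a'.2 - a.2 * a'.1 : ℤ) : ℝ) ≠ 0 := Int.cast_ne_zero.2 h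
    push_cast at this
    exact this
  have hdpos : 0 < |d| := abs_pos.2 hd
  set N : ℝ := |(a.1:ℝ)| + |(a.2:ℝ)| with hN_def
  set N' : ℝ := |(a'.1:ℝ)| + |(a'.2:ℝ)| with hN'_def
  have hN : 1 ≤ N := by
    have ha : a.1 ≠ 0 ∨ a.2 ≠ 0 := by
      by_contra hc
      push_neg at hc
      apply h
      rw [hc.1, hc.2]
      ring
    have hZ : (1:ℤ) ≤ |a.1| + |a.2| := by
      rcases ha with h1 | h2
      · have := Int.one_le_abs h1; have := abs_nonneg a.2; omega
      · have := Int.one_le_abs h2; have := abs_nonneg a.1; omega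
    have : ((1:ℤ):ℝ) ≤ ((|a.1| + |a.2| : ℤ) : ℝ) := by exact_mod_cast hZ
    rwa [Int.cast_add, Int.cast_abs, Int.cast_abs, Int.cast_one] at this
  have hN' : 1 ≤ N' := by
    have ha : a'.1 ≠ 0 ∨ a'.2 ≠ 0 := by
      by_contra hc
      push_neg at hc
      apply h
      rw [hc.1, hc.2]
      ring
    have hZ : (1:ℤ) ≤ |a'.1| + |a'.2| := by
      rcases ha with h1 | h2
      · have := Int.one_le_abs h1; have := abs_nonneg a'.2; omega
      · have := Int.one_le_abs h2; have := abs_nonneg a'.1; omega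
    have : ((1:ℤ):ℝ) ≤ ((|a'.1| + |a'.2| : ℤ) : ℝ) := by exact_mod_cast hZ
    rwa [Int.cast_add, Int.cast_abs, Int.cast_abs, Int.cast_one] at this
  set K : ℝ := 64 * N * N' / |d| with hK_def
  have hK : 0 < K := by positivity
  have hQ2 : MeasurableSet Q2 := measurableSet_Icc.prod measurableSet_Icc
  have hπ : (0:ℝ) < π := pi_pos
  -- split on p = ∞
  by_cases hptop : p = ⊤
  · refine ⟨M^2 + 1, by positivity, ?_⟩
    intro μ hμ σ hσ c c'
    have hμ0 : (0:ℝ) < μ := lt_of_lt_of_le one_pos hμ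
    have hbd : ∀ x : V2, ‖perExt (fun z => μ ^ ((1:ℝ)/2) * φ (μ*z)) ((σ:ℝ) * adot a x - c) *
        perExt (fun z => μ ^ ((1:ℝ)/2) * φ (μ*z)) ((σ:ℝ) * adot a' x - c')‖ ≤ μ * M^2 := by
      intro x
      rw [Real.norm_eq_abs]
      exact aux_prod_bound φ hsupp M hM μ hμ _ _
    refine le_trans (eLpNorm_le_of_ae_bound (ae_of_all _ hbd)) ?_
    rw [hptop]
    have h0 : ((⊤:ℝ≥0∞).toReal)⁻¹ = (0:ℝ) := by norm_num
    have h1 : (1:ℝ) - 2/(⊤:ℝ≥0∞).toReal = 1 := by norm_num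
    rw [h0, h1, ENNReal.rpow_zero, one_mul, Real.rpow_one]
    apply ENNReal.ofReal_le_ofReal
    nlinarith
  · -- p finite
    have hp0 : p ≠ 0 := (lt_of_lt_of_le zero_lt_one hp).ne'
    set q : ℝ := p.toReal with hq_def
    have hq1 : 1 ≤ q := by
      have := ENNReal.toReal_mono hptop hp
      simpa using this
    have hq0 : 0 < q := lt_of_lt_of_le one_pos hq1
    refine ⟨M^2 * K^((1:ℝ)/q) + 1, by positivity, ?_⟩
    intro μ hμ σ hσ c c'
    have hμ0 : (0:ℝ) < μ := lt_of_lt_of_le one_pos hμ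
    have hσ0 : (0:ℝ) < (σ:ℝ) := by exact_mod_cast hσ
    set g : ℝ → ℝ := fun z => μ ^ ((1:ℝ)/2) * φ (μ*z) with hg_def
    set R : ℝ := 2*π*σ*N with hR_def
    set R' : ℝ := 2*π*σ*N' with hR'_def
    obtain ⟨U, hUmeas, hUmem, hUvol⟩ := aux_oneD c R μ (by positivity) hμ
    obtain ⟨U', hU'meas, hU'mem, hU'vol⟩ := aux_oneD c' R' μ (by positivity) hμ
    set T : V2 →ₗ[ℝ] V2 := Tmap ((σ:ℝ)*a.1) ((σ:ℝ)*a.2) ((σ:ℝ)*a'.1) ((σ:ℝ)*a'.2) with hT_def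
    have hTdet : T.det = (σ:ℝ)^2 * d := by
      rw [hT_def, Tmap_det, hd_def]
      ring
    have hTdet_ne : T.det ≠ 0 := by
      rw [hTdet]
      exact mul_ne_zero (by positivity) hd
    set S : Set V2 := T ⁻¹' (U ×ˢ U') with hS_def
    have hTcont : Continuous T := T.continuous_of_finiteDimensional
    have hSmeas : MeasurableSet S := hTcont.measurable (hUmeas.prod hU'meas)
    -- pointwise domination by the indicator
    have hbound : ∀ x ∈ Q2,
        ‖perExt g ((σ:ℝ) * adot a x - c) * perExt g ((σ:ℝ) * adot a' x - c')‖
          ≤ ‖S.indicator (fun _ => μ * M^2) x‖ := by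
      intro x hx
      obtain ⟨hx1, hx2⟩ := hx
      simp only [Set.mem_Icc] at hx1 hx2
      by_cases hxS : x ∈ S
      · rw [Set.indicator_of_mem hxS, Real.norm_eq_abs, Real.norm_eq_abs,
          abs_of_nonneg (by positivity : (0:ℝ) ≤ μ * M^2)]
        exact aux_prod_bound φ hsupp M hM μ hμ _ _
      · rw [Set.indicator_of_notMem hxS, norm_zero]
        have hf0 : perExt g ((σ:ℝ) * adot a x - c) * perExt g ((σ:ℝ) * adot a' x - c') = 0 := by
          by_contra hne
          rcases mul_ne_zero_iff.1 hne with ⟨hne1, hne2⟩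
          obtain ⟨j, hj⟩ := aux_perExt_supp φ hsupp μ hμ _ hne1
          obtain ⟨j', hj'⟩ := aux_perExt_supp φ hsupp μ hμ _ hne2
          have hax : |(σ:ℝ) * adot a x| ≤ R := by
            rw [abs_mul, abs_of_pos hσ0, hR_def]
            have hadot : |adot a x| ≤ 2*π*N := by
              unfold adot
              calc |(a.1:ℝ)*x.1 + (a.2:ℝ)*x.2| ≤ |(a.1:ℝ)*x.1| + |(a.2:ℝ)*x.2| := abs_add_le _ _
                _ = |(a.1:ℝ)| * |x.1| + |(a.2:ℝ)| * |x.2| := by rw [abs_mul, abs_mul]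
                _ ≤ |(a.1:ℝ)| * (2*π) + |(a.2:ℝ)| * (2*π) := by
                    have hxa : |x.1| ≤ 2*π := by rw [abs_of_nonneg hx1.1]; exact hx1.2
                    have hxb : |x.2| ≤ 2*π := by rw [abs_of_nonneg hx2.1]; exact hx2.2
                    exact add_le_add (mul_le_mul_of_nonneg_left hxa (abs_nonneg _))
                      (mul_le_mul_of_nonneg_left hxb (abs_nonneg _))
                _ = 2*π*N := by rw [hN_def]; ring
            calc (σ:ℝ) * |adot a x| ≤ (σ:ℝ) * (2*π*N) :=
                  mul_le_mul_of_nonneg_left hadot (le_of_lt hσ0)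
              _ = 2*π*σ*N := by ring
          have hax' : |(σ:ℝ) * adot a' x| ≤ R' := by
            rw [abs_mul, abs_of_pos hσ0, hR'_def]
            have hadot : |adot a' x| ≤ 2*π*N' := by
              unfold adot
              calc |(a'.1:ℝ)*x.1 + (a'.2:ℝ)*x.2| ≤ |(a'.1:ℝ)*x.1| + |(a'.2:ℝ)*x.2| := abs_add_le _ _
                _ = |(a'.1:ℝ)| * |x.1| + |(a'.2:ℝ)| * |x.2| := by rw [abs_mul, abs_mul]
                _ ≤ |(a'.1:ℝ)| * (2*π) + |(a'.2:ℝ)| * (2*π) := by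
                    have hxa : |x.1| ≤ 2*π := by rw [abs_of_nonneg hx1.1]; exact hx1.2
                    have hxb : |x.2| ≤ 2*π := by rw [abs_of_nonneg hx2.1]; exact hx2.2
                    exact add_le_add (mul_le_mul_of_nonneg_left hxa (abs_nonneg _))
                      (mul_le_mul_of_nonneg_left hxb (abs_nonneg _))
                _ = 2*π*N' := by rw [hN'_def]; ring
            calc (σ:ℝ) * |adot a' x| ≤ (σ:ℝ) * (2*π*N') :=
                  mul_le_mul_of_nonneg_left hadot (le_of_lt hσ0)
              _ = 2*π*σ*N' := by ring
          have hU1 : (σ:ℝ) * adot a x ∈ U := hUmem _ hax ⟨j, hj⟩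
          have hU2 : (σ:ℝ) * adot a' x ∈ U' := hU'mem _ hax' ⟨j', hj'⟩
          apply hxS
          rw [hS_def, Set.mem_preimage]
          have hTx : T x = ((σ:ℝ) * adot a x, (σ:ℝ) * adot a' x) := by
            rw [hT_def]
            simp only [Tmap, LinearMap.coe_mk, AddHom.coe_mk, adot, Prod.mk.injEq]
            constructor <;> ring
          rw [hTx]
          exact ⟨hU1, hU2⟩
        rw [hf0, norm_zero]
    -- eLpNorm comparison
    have hmono : eLpNorm (fun x : V2 =>
          perExt g ((σ:ℝ) * adot a x - c) * perExt g ((σ:ℝ) * adot a' x - c'))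
          p (volume.restrict Q2)
        ≤ eLpNorm (S.indicator (fun _ => μ * M^2)) p (volume.restrict Q2) :=
      eLpNorm_mono_ae ((ae_restrict_iff' hQ2).2 (ae_of_all _ hbound))
    rw [eLpNorm_indicator_const hSmeas hp0 hptop] at hmono
    -- measure of S
    have hSvol : (volume.restrict Q2) S ≤ ENNReal.ofReal (K / μ^2) := by
      rw [Measure.restrict_apply hSmeas]
      calc volume (S ∩ Q2) ≤ volume S := measure_mono Set.inter_subset_left
        _ = ENNReal.ofReal |T.det⁻¹| * volume (U ×ˢ U') :=
            Measure.addHaar_preimage_linearMap volume hTdet_ne _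
        _ = ENNReal.ofReal |T.det⁻¹| * (volume U * volume U') := by
            rw [Measure.volume_eq_prod, Measure.prod_prod]
        _ ≤ ENNReal.ofReal (((σ:ℝ)^2 * |d|)⁻¹) *
              (ENNReal.ofReal (((R+1)/π + 1) * (2/μ)) *
                ENNReal.ofReal (((R'+1)/π + 1) * (2/μ))) := by
            have : |T.det⁻¹| = ((σ:ℝ)^2 * |d|)⁻¹ := by
              rw [hTdet, abs_inv, abs_mul, abs_of_pos (by positivity : (0:ℝ) < (σ:ℝ)^2)]
            rw [this]
            exact mul_le_mul' le_rfl (mul_le_mul' hUvol hU'vol)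
        _ ≤ ENNReal.ofReal (K / μ^2) := by
            rw [← ENNReal.ofReal_mul (by positivity), ← ENNReal.ofReal_mul (by positivity)]
            apply ENNReal.ofReal_le_ofReal
            have h1π : 1/π ≤ 1 := by
              rw [div_le_one hπ]
              linarith [pi_gt_three]
            have hσ1 : (1:ℝ) ≤ (σ:ℝ) := by exact_mod_cast hσ
            have hσN : (1:ℝ) ≤ (σ:ℝ)*N := by nlinarith [hσ1, hN]
            have hσN' : (1:ℝ) ≤ (σ:ℝ)*N' := by nlinarith [hσ1, hN']
            have e1 : (R+1)/π + 1 ≤ 4*σ*N := by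
              have : (R+1)/π = 2*σ*N + 1/π := by
                rw [hR_def]; field_simp
              rw [this]
              nlinarith
            have e1' : (R'+1)/π + 1 ≤ 4*σ*N' := by
              have : (R'+1)/π = 2*σ*N' + 1/π := by
                rw [hR'_def]; field_simp
              rw [this]
              nlinarith
            have hfin : ((σ:ℝ)^2 * |d|)⁻¹ * ((4*σ*N*(2/μ)) * (4*σ*N'*(2/μ))) = K / μ^2 := by
              rw [hK_def]
              field_simp
              ring
            calc ((σ:ℝ)^2 * |d|)⁻¹ * ((((R+1)/π + 1) * (2/μ)) * (((R'+1)/π + 1) * (2/μ)))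
                ≤ ((σ:ℝ)^2 * |d|)⁻¹ * ((4*σ*N*(2/μ)) * (4*σ*N'*(2/μ))) := by
                  apply mul_le_mul_of_nonneg_left _ (by positivity)
                  apply mul_le_mul _ _ (by positivity) (by positivity)
                  · exact mul_le_mul_of_nonneg_right e1 (by positivity)
                  · exact mul_le_mul_of_nonneg_right e1' (by positivity)
              _ = K / μ^2 := hfin
    -- finish
    have hnn : ‖μ * M^2‖ₑ = ENNReal.ofReal (μ * M^2) := by
      rw [← ofReal_norm, Real.norm_eq_abs,
        abs_of_nonneg (by positivity : (0:ℝ) ≤ μ * M^2)]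
    refine le_trans hmono ?_
    rw [hnn]
    calc ENNReal.ofReal (μ * M^2) * (volume.restrict Q2) S ^ (1/q)
        ≤ ENNReal.ofReal (μ * M^2) * ENNReal.ofReal (K / μ^2) ^ (1/q) := by
          gcongr
      _ = ENNReal.ofReal (μ * M^2) * ENNReal.ofReal ((K / μ^2) ^ ((1:ℝ)/q)) := by
          rw [← ENNReal.ofReal_rpow_of_pos (by positivity)]
      _ = ENNReal.ofReal (μ * M^2 * (K / μ^2) ^ ((1:ℝ)/q)) := by
          rw [← ENNReal.ofReal_mul (by positivity)]
      _ ≤ ENNReal.ofReal ((M^2 * K^((1:ℝ)/q) + 1) * μ ^ ((1:ℝ) - 2/q)) := by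
          apply ENNReal.ofReal_le_ofReal
          have e1 : ((μ:ℝ)^2) ^ ((1:ℝ)/q) = μ ^ ((2:ℝ)/q) := by
            rw [← Real.rpow_natCast μ 2, ← Real.rpow_mul hμ0.le]
            norm_num [div_eq_mul_inv]
          have e2 : (K / μ^2) ^ ((1:ℝ)/q) = K^((1:ℝ)/q) / μ ^ ((2:ℝ)/q) := by
            rw [Real.div_rpow hK.le (by positivity), e1]
          have e3 : μ ^ ((1:ℝ) - 2/q) = μ / μ ^ ((2:ℝ)/q) := by
            rw [Real.rpow_sub hμ0, Real.rpow_one]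
          rw [e2, e3]
          have hb : (0:ℝ) < μ ^ ((2:ℝ)/q) := Real.rpow_pos_of_pos hμ0 _
          rw [show μ * M^2 * (K^((1:ℝ)/q) / μ ^ ((2:ℝ)/q))
              = (μ * M^2 * K^((1:ℝ)/q)) / μ ^ ((2:ℝ)/q) by ring,
            show (M^2 * K^((1:ℝ)/q) + 1) * (μ / μ ^ ((2:ℝ)/q))
              = ((M^2 * K^((1:ℝ)/q) + 1) * μ) / μ ^ ((2:ℝ)/q) by ring]
          apply div_le_div_of_nonneg_right _ hb.le
          nlinarith [Real.rpow_nonneg hK.le ((1:ℝ)/q)]
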